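/- arXiv:1809.09036 — 4 statements merged into one kernel-verified Lean document; each statement's English description precedes it below -/
import Mathlib

section
/- For all integers 0 ≤ k ≤ n, the product {k}!·{n-k}! divides {n}! in Z[s,t], and the quotient, i.e. the Lucasnomial {n choose k}_L, is a polynomial in s and t all of whose coefficients are nonnegative integers. (Formally: there exists a polynomial p ∈ Z[s,t] with all coefficients nonnegative such that {n}! = p·{k}!·{n-k}!.) -/
open MvPolynomial Finset

noncomputable section

/-- Polynomial ring ℤ[s,t] with s = X 0, t = X 1. -/
abbrev P2 : Type := MvPolynomial (Fin 2) ℤ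

def ps : P2 := X 0
def pt : P2 := X 1

/-- The Lucas sequence of polynomials: {0}=0, {1}=1, {n}=s{n-1}+t{n-2}. -/
def lucas : ℕ → P2
  | 0 => 0
  | 1 => 1
  | (n+2) => ps * lucas (n+1) + pt * lucas n

/-- The Lucastorial {n}! = {1}{2}⋯{n}. -/
def lucasFact (n : ℕ) : P2 := ∏ i ∈ Finset.range n, lucas (i+1)

/-- The d-divisible Lucastorial {n:d}! = {d}{2d}⋯{nd}. -/
def lucasFactD (d n : ℕ) : P2 := ∏ i ∈ Finset.range n, lucas (d*(i+1))

/-- A polynomial lies in ℕ[s,t]: all coefficients are nonnegative. -/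
def Nonneg (p : P2) : Prop := ∀ m, 0 ≤ p.coeff m

/-- The fraction field ℤ(s,t). -/
abbrev K : Type := FractionRing P2

def φ : P2 →+* K := algebraMap P2 K

def L (n : ℕ) : K := φ (lucas n)

def LFact (n : ℕ) : K := φ (lucasFact n)

def LFactD (d n : ℕ) : K := φ (lucasFactD d n)

/-- The Lucasnomial {n choose k}, as an element of the fraction field. -/
def lnom (n k : ℕ) : K := LFact n / (LFact k * LFact (n-k))

/-- The d-divisible Lucasnomial {n:d choose k:d}, as an element of the fraction field. -/
def lnomD (d n k : ℕ) : K := LFactD d n / (LFactD d k * LFactD d (n-k))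

/-- The Lucas-Catalan number C_{n} = (1/{n+1}) {2n choose n}. -/
def catL (n : ℕ) : K := lnom (2*n) n / L (n+1)

/-- The Lucas-Fuss-Catalan number C_{n,k} = (1/{kn+1}) {(k+1)n choose n}. -/
def fussCatL (n k : ℕ) : K := lnom ((k+1)*n) n / L (k*n+1)

/-! Write `B(a, b) = {a+b}! / ({a}! {b}!)`. Splitting the last factor of `{a+b+2}!` by the addition
formula `{m+n+1} = {m+1}{n+1} + t{m}{n}` gives the Pascal-type recurrence
`B(a+1, b+1) = {a+2} B(a+1, b) + t{b} B(a, b+1)`. By induction every `B(a, b)` is thus built from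
`s`, `t` and Lucas polynomials by sums and products, so it lies in the image of `ℕ[s,t]`. -/

def natPoly : Subsemiring P2 := (MvPolynomial.map (Nat.castRingHom ℤ)).rangeS

lemma Nonneg.of_mem_natPoly {p : P2} (hp : p ∈ natPoly) : Nonneg p := by
  obtain ⟨q, rfl⟩ := hp
  intro m
  rw [coeff_map]
  exact Int.natCast_nonneg _

lemma X_mem_natPoly (i : Fin 2) : (X i : P2) ∈ natPoly := ⟨X i, map_X _ _⟩

lemma lucas_mem_natPoly : ∀ n, lucas n ∈ natPoly
  | 0 => natPoly.zero_mem
  | 1 => natPoly.one_mem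
  | n + 2 => natPoly.add_mem
      (natPoly.mul_mem (X_mem_natPoly 0) (lucas_mem_natPoly (n + 1)))
      (natPoly.mul_mem (X_mem_natPoly 1) (lucas_mem_natPoly n))

lemma lucas_add_add_one (m n : ℕ) :
    lucas (m + n + 1) = lucas (m + 1) * lucas (n + 1) + pt * lucas m * lucas n := by
  induction m generalizing n with
  | zero => simp [lucas]
  | succ m ih =>
    rw [show m + 1 + n + 1 = m + (n + 1) + 1 by omega, ih, lucas, lucas]
    ring

lemma lucasFact_succ (n : ℕ) : lucasFact (n + 1) = lucasFact n * lucas (n + 1) :=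
  prod_range_succ _ _

lemma exists_mem_natPoly_lucasFact_add (a b : ℕ) :
    ∃ p ∈ natPoly, lucasFact (a + b) = p * (lucasFact a * lucasFact b) := by
  induction a generalizing b with
  | zero => exact ⟨1, natPoly.one_mem, by simp [lucasFact]⟩
  | succ a iha =>
    induction b with
    | zero => exact ⟨1, natPoly.one_mem, by simp [lucasFact]⟩
    | succ b ihb =>
      obtain ⟨p, hp, hab⟩ := ihb
      obtain ⟨q, hq, hab'⟩ := iha (b + 1)
      refine ⟨lucas (a + 2) * p + pt * lucas b * q,
        natPoly.add_mem (natPoly.mul_mem (lucas_mem_natPoly _) hp)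
          (natPoly.mul_mem (natPoly.mul_mem (X_mem_natPoly 1) (lucas_mem_natPoly _)) hq), ?_⟩
      have hlast : lucas (a + 1 + b + 1) =
          lucas (a + 2) * lucas (b + 1) + pt * lucas (a + 1) * lucas b :=
        lucas_add_add_one (a + 1) b
      rw [show a + (b + 1) = a + 1 + b by omega] at hab'
      rw [show a + 1 + (b + 1) = a + 1 + b + 1 by omega, lucasFact_succ (a + 1 + b), hlast]
      simp only [lucasFact_succ a, lucasFact_succ b] at hab hab' ⊢
      linear_combination
        (lucas (a + 2) * lucas (b + 1)) * hab + (pt * lucas (a + 1) * lucas b) * hab'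

/-- {k}!{n-k}! divides {n}! with quotient (the Lucasnomial) in ℕ[s,t]. -/
theorem lucasnomial_nonneg (n k : ℕ) (hk : k ≤ n) :
    ∃ p : P2, Nonneg p ∧ lucasFact n = p * (lucasFact k * lucasFact (n-k)) := by
  obtain ⟨p, hp, h⟩ := exists_mem_natPoly_lucasFact_add k (n - k)
  rw [Nat.add_sub_cancel' hk] at h
  exact ⟨p, Nonneg.of_mem_natPoly hp, h⟩
end
end

section
/- For all positive integers m and n, the Lucas polynomial {gcd(m,n)} is a greatest common divisor of {m} and {n} in the ring Z[s,t]; that is, {gcd(m,n)} divides both {m} and {n}, and every common divisor of {m} and {n} in Z[s,t] divides {gcd(m,n)}. -/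
open MvPolynomial Finset

noncomputable section

/-!
Over any commutative ring, the sequence `u 0 = 0`, `u 1 = 1`, `u (n+2) = a u (n+1) + b u n`
satisfies `u (m + n + 1) = u (m+1) u (n+1) + b u m u n`, so `u d ∣ u (d k)`. If `a` and `b` are
relatively prime, then so are `u (n+1)` and `b` (as `u (n+1) ≡ a ^ n` mod `b`) and hence, by the
recurrence, consecutive terms. The addition formula then shows that a common divisor of `u m` and
`u (r + m)` divides `u r`, and the Euclidean algorithm on the indices gives `q ∣ u (gcd m n)`.
Finally `s` and `t` are distinct primes of `ℤ[s,t]`.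
-/

section CommSemiring

variable {R : Type*} [CommSemiring R]

def lucasSeq (a b : R) : ℕ → R
  | 0 => 0
  | 1 => 1
  | n + 2 => a * lucasSeq a b (n + 1) + b * lucasSeq a b n

variable (a b : R)

@[simp]
theorem lucasSeq_zero : lucasSeq a b 0 = 0 := rfl

@[simp]
theorem lucasSeq_one : lucasSeq a b 1 = 1 := rfl

theorem lucasSeq_add_two (n : ℕ) :
    lucasSeq a b (n + 2) = a * lucasSeq a b (n + 1) + b * lucasSeq a b n := rfl

theorem lucasSeq_add_add_one (m n : ℕ) :
    lucasSeq a b (m + n + 1) =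
      lucasSeq a b (m + 1) * lucasSeq a b (n + 1) + b * lucasSeq a b m * lucasSeq a b n := by
  induction m using Nat.twoStepInduction with
  | zero => simp
  | one => simp [add_comm 1 n, lucasSeq_add_two]
  | more m ih₀ ih₁ =>
    rw [show m + 2 + n + 1 = m + n + 1 + 2 by ring, lucasSeq_add_two,
      show m + n + 1 + 1 = m + 1 + n + 1 by ring, ih₀, ih₁, lucasSeq_add_two a b (m + 1),
      lucasSeq_add_two a b m]
    ring

theorem lucasSeq_dvd_lucasSeq_mul (d k : ℕ) : lucasSeq a b d ∣ lucasSeq a b (d * k) := by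
  induction k with
  | zero => simp
  | succ k ih =>
    cases d with
    | zero => simp
    | succ d =>
      rw [show (d + 1) * (k + 1) = (d + 1) * k + d + 1 by ring, lucasSeq_add_add_one]
      exact dvd_add (dvd_mul_left _ _) ((ih.mul_left b).mul_right _)

theorem isDvdSequence_lucasSeq : IsDvdSequence (lucasSeq a b) := by
  rintro d _ ⟨k, rfl⟩
  exact lucasSeq_dvd_lucasSeq_mul a b d k

end CommSemiring

section DecompositionMonoid

variable {R : Type*} [CommRing R] [DecompositionMonoid R] {a b : R}

theorem isRelPrime_lucasSeq_succ_left (h : IsRelPrime a b) (n : ℕ) :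
    IsRelPrime (lucasSeq a b (n + 1)) b := by
  induction n with
  | zero => exact isRelPrime_one_left
  | succ n ih =>
    refine IsRelPrime.of_add_mul_left_left (z := -lucasSeq a b n) ?_
    rw [lucasSeq_add_two, mul_neg, add_neg_cancel_right]
    exact h.mul_left ih

theorem isRelPrime_lucasSeq_lucasSeq_succ (h : IsRelPrime a b) (n : ℕ) :
    IsRelPrime (lucasSeq a b n) (lucasSeq a b (n + 1)) := by
  induction n with
  | zero => exact isRelPrime_zero_left.mpr isUnit_one
  | succ n ih =>
    intro q hq₁ hq₂
    rw [lucasSeq_add_two, dvd_add_right (hq₁.mul_left a)] at hq₂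
    have hqb : IsRelPrime q b := (isRelPrime_lucasSeq_succ_left h n).of_dvd_left hq₁
    exact ih (hqb.dvd_of_dvd_mul_left hq₂) hq₁

theorem dvd_lucasSeq_of_dvd_of_dvd_add (h : IsRelPrime a b) {q : R} {m r : ℕ}
    (hm : q ∣ lucasSeq a b m) (hrm : q ∣ lucasSeq a b (r + m)) : q ∣ lucasSeq a b r := by
  cases m with
  | zero => simpa using hrm
  | succ m =>
    rw [← add_assoc, lucasSeq_add_add_one, dvd_add_right (hm.mul_left _), mul_right_comm] at hrm
    have hqb : IsRelPrime q b := (isRelPrime_lucasSeq_succ_left h m).of_dvd_left hm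
    have hqm : IsRelPrime q (lucasSeq a b m) :=
      (isRelPrime_lucasSeq_lucasSeq_succ h m).symm.of_dvd_left hm
    exact (hqb.mul_right hqm).dvd_of_dvd_mul_left hrm

theorem dvd_lucasSeq_gcd (h : IsRelPrime a b) {q : R} {m n : ℕ}
    (hm : q ∣ lucasSeq a b m) (hn : q ∣ lucasSeq a b n) : q ∣ lucasSeq a b (Nat.gcd m n) := by
  induction m, n using Nat.gcd.induction with
  | H0 n => simpa using hn
  | H1 m n _ ih =>
    have hmul : q ∣ lucasSeq a b (m * (n / m)) := hm.trans (lucasSeq_dvd_lucasSeq_mul a b m _)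
    rw [← Nat.mod_add_div n m] at hn
    rw [Nat.gcd_rec]
    exact ih (dvd_lucasSeq_of_dvd_of_dvd_add h hmul hn) hm

end DecompositionMonoid

theorem lucas_eq_lucasSeq : lucas = lucasSeq ps pt := by
  funext n
  induction n using Nat.twoStepInduction with
  | zero => rfl
  | one => rfl
  | more n ih₀ ih₁ => rw [lucas, lucasSeq_add_two, ih₀, ih₁]

theorem isRelPrime_ps_pt : IsRelPrime ps pt := by
  unfold ps pt
  exact X_prime.irreducible.isRelPrime_iff_not_dvd.mpr (by simp)

theorem lucas_gcd_general (m n : ℕ) :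
    lucas (Nat.gcd m n) ∣ lucas m ∧ lucas (Nat.gcd m n) ∣ lucas n ∧
    ∀ q : P2, q ∣ lucas m → q ∣ lucas n → q ∣ lucas (Nat.gcd m n) := by
  rw [lucas_eq_lucasSeq]
  exact ⟨isDvdSequence_lucasSeq ps pt _ _ (Nat.gcd_dvd_left m n),
    isDvdSequence_lucasSeq ps pt _ _ (Nat.gcd_dvd_right m n),
    fun _ ↦ dvd_lucasSeq_gcd isRelPrime_ps_pt⟩

/-- {gcd(m,n)} is a gcd of {m} and {n} in ℤ[s,t]. -/
theorem lucas_gcd (m n : ℕ) (hm : 0 < m) (hn : 0 < n) :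
    lucas (Nat.gcd m n) ∣ lucas m ∧ lucas (Nat.gcd m n) ∣ lucas n ∧
    ∀ q : P2, q ∣ lucas m → q ∣ lucas n → q ∣ lucas (Nat.gcd m n) :=
  lucas_gcd_general m n
end
end

section
/- For every integer n ≥ 3, the Lucas–Coxeter–Catalan analogue for the Coxeter group D_n, namely Cat D_{n} = ({3n-2}/{n}) · {2(n-1):2 choose n-1:2}_L (which equals the product Π_{i=1}^{n} {h+d_i}/{d_i}, where the degrees of D_n are 2,4,…,2(n-1),n and h = 2(n-1)), is a polynomial in s and t all of whose coefficients are nonnegative integers. -/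
open MvPolynomial Finset

noncomputable section

/-! By the addition formula `{a+b+1} = {a+1}{b+1} + t{a}{b}`, the d-divisible Lucasnomials satisfy
a Pascal recurrence with coefficients in ℕ[s,t], hence lie in ℕ[s,t]. For `n = m + 2` the same
formula gives `{3m+4} = {2m+2}{m+3} + t{2m+1}{m+2}`. The second summand cancels the denominator
`{m+2}`; in the first, `{2m+2} {2m+2:2 choose m+1:2} = {2m+4} {2m+2:2 choose m:2}` and
`{2m+4}/{m+2} = {m+3} + t{m+1}`, so Cat D_n is an ℕ[s,t]-combination of Lucasnomials. -/

lemma L_add (a b : ℕ) : L (a + b + 1) = L (a + 1) * L (b + 1) + φ pt * L a * L b := by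
  induction b using Nat.twoStepInduction generalizing a with
  | zero => simp [L, lucas]
  | one => simp [L, lucas, ps, mul_comm]
  | more b ih ih' =>
    have hrec (k : ℕ) : L (k + 2) = φ ps * L (k + 1) + φ pt * L k := by
      simp only [L, lucas, map_add, map_mul]
    rw [show a + (b + 2) + 1 = a + b + 1 + 2 by omega, hrec, show a + b + 1 + 1 = a + (b + 1) + 1 by omega,
      ih' a, ih a, hrec (b + 1), hrec b]
    ring

lemma lucas_succ_ne_zero (n : ℕ) : lucas (n + 1) ≠ 0 := by
  suffices h : eval ![1, 0] (lucas (n + 1)) = 1 by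
    intro h0
    simp [h0] at h
  induction n using Nat.twoStepInduction with
  | zero => simp [lucas]
  | one => simp [lucas, ps, pt]
  | more n ih _ => simp [lucas, ps, pt, ih]

lemma L_ne_zero {n : ℕ} (hn : n ≠ 0) : L n ≠ 0 := by
  obtain ⟨k, rfl⟩ := Nat.exists_eq_succ_of_ne_zero hn
  exact (map_ne_zero_iff φ (IsFractionRing.injective P2 K)).mpr (lucas_succ_ne_zero k)

section Divisible

variable {d : ℕ}

lemma LFactD_succ (n : ℕ) : LFactD d (n + 1) = LFactD d n * L (d * (n + 1)) := by
  simp only [LFactD, lucasFactD, Finset.prod_range_succ, map_mul, L]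

lemma LFactD_zero : LFactD d 0 = 1 := by
  simp [LFactD, lucasFactD]

lemma LFactD_ne_zero (hd : d ≠ 0) (n : ℕ) : LFactD d n ≠ 0 := by
  induction n with
  | zero => simp [LFactD_zero]
  | succ n ih => rw [LFactD_succ]; exact mul_ne_zero ih (L_ne_zero (by positivity))

lemma lnomD_self (hd : d ≠ 0) (i : ℕ) : lnomD d i i = 1 := by
  rw [lnomD, Nat.sub_self, LFactD_zero, mul_one, div_self (LFactD_ne_zero hd i)]

lemma lnomD_zero_right (hd : d ≠ 0) (j : ℕ) : lnomD d j 0 = 1 := by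
  rw [lnomD, Nat.sub_zero, LFactD_zero, one_mul, div_self (LFactD_ne_zero hd j)]

lemma lnomD_pascal (hd : d ≠ 0) (i j : ℕ) :
    lnomD d (i + 1 + (j + 1)) (i + 1) =
      L (d * (i + 1) + 1) * lnomD d (i + 1 + j) (i + 1) +
        φ pt * L (d * (j + 1) - 1) * lnomD d (i + (j + 1)) i := by
  obtain ⟨b, hb⟩ : ∃ b, d * (j + 1) = b + 1 := Nat.exists_eq_add_one.mpr (by positivity)
  have hsplit : L (d * (i + 1 + j + 1)) =
      L (d * (i + 1) + 1) * L (d * (j + 1)) + φ pt * L (d * (i + 1)) * L b := by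
    rw [hb, ← L_add, add_assoc _ b, ← hb]
    ring_nf
  have hi := LFactD_ne_zero hd i
  have hj := LFactD_ne_zero hd j
  have hLi : L (d * (i + 1)) ≠ 0 := L_ne_zero (by positivity)
  have hLj : L (d * (j + 1)) ≠ 0 := L_ne_zero (by positivity)
  rw [lnomD, lnomD, lnomD, show i + 1 + (j + 1) - (i + 1) = j + 1 by omega,
    show i + 1 + j - (i + 1) = j by omega, show i + (j + 1) - i = j + 1 by omega,
    show i + (j + 1) = i + 1 + j by omega, show d * (j + 1) - 1 = b by omega,
    show i + 1 + (j + 1) = i + 1 + j + 1 by omega, LFactD_succ (i + 1 + j), hsplit,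
    LFactD_succ i, LFactD_succ j]
  field_simp

end Divisible

def nonnegSubsemiring : Subsemiring P2 where
  carrier := {p | Nonneg p}
  mul_mem' hp hq m := by
    rw [coeff_mul]
    exact Finset.sum_nonneg fun x _ => mul_nonneg (hp _) (hq _)
  one_mem' m := by rw [coeff_one]; split_ifs <;> norm_num
  add_mem' hp hq m := by rw [coeff_add]; exact add_nonneg (hp m) (hq m)
  zero_mem' m := by simp

lemma X_mem_nonnegSubsemiring (i : Fin 2) : X i ∈ nonnegSubsemiring := fun m => by
  rw [coeff_X]
  split_ifs <;> norm_num

lemma lucas_mem_nonnegSubsemiring (n : ℕ) : lucas n ∈ nonnegSubsemiring := by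
  induction n using Nat.twoStepInduction with
  | zero => exact zero_mem _
  | one => exact one_mem _
  | more n ih ih' =>
    exact add_mem (mul_mem (X_mem_nonnegSubsemiring 0) ih') (mul_mem (X_mem_nonnegSubsemiring 1) ih)

def nonnegK : Subsemiring K := nonnegSubsemiring.map φ

lemma φ_mem_nonnegK {p : P2} (hp : p ∈ nonnegSubsemiring) : φ p ∈ nonnegK :=
  Subsemiring.mem_map.mpr ⟨p, hp, rfl⟩

lemma pt_mem_nonnegK : φ pt ∈ nonnegK := φ_mem_nonnegK (X_mem_nonnegSubsemiring 1)

lemma L_mem_nonnegK (n : ℕ) : L n ∈ nonnegK := φ_mem_nonnegK (lucas_mem_nonnegSubsemiring n)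

lemma lnomD_mem_nonnegK {d n k : ℕ} (hd : d ≠ 0) (hk : k ≤ n) : lnomD d n k ∈ nonnegK := by
  obtain ⟨j, rfl⟩ := Nat.exists_eq_add_of_le hk
  clear hk
  induction k generalizing j with
  | zero => rw [Nat.zero_add, lnomD_zero_right hd]; exact nonnegK.one_mem
  | succ i ih =>
    induction j with
    | zero => rw [Nat.add_zero, lnomD_self hd]; exact nonnegK.one_mem
    | succ j ihj =>
      rw [lnomD_pascal hd]
      exact add_mem (mul_mem (L_mem_nonnegK _) ihj)
        (mul_mem (mul_mem pt_mem_nonnegK (L_mem_nonnegK _)) (ih _))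

lemma L_div_mul_lnomD_two (m : ℕ) :
    L (3 * m + 4) / L (m + 2) * lnomD 2 (2 * m + 2) (m + 1) =
      L (m + 3) * (L (m + 3) + φ pt * L (m + 1)) * lnomD 2 (2 * m + 2) m +
        φ pt * L (2 * m + 1) * lnomD 2 (2 * m + 2) (m + 1) := by
  have hsplit : L (3 * m + 4) = L (2 * m + 2) * L (m + 3) + φ pt * L (2 * m + 1) * L (m + 2) := by
    rw [← L_add]; ring_nf
  have hdouble : L (2 * m + 4) = L (m + 2) * (L (m + 3) + φ pt * L (m + 1)) := by
    rw [show 2 * m + 4 = m + 1 + (m + 2) + 1 by omega, L_add]; ring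
  have hFm := LFactD_ne_zero two_ne_zero m
  have hL2 : L (2 * m + 2) ≠ 0 := L_ne_zero (by omega)
  have hL4 : L (2 * m + 4) ≠ 0 := L_ne_zero (by omega)
  have hLm : L (m + 2) ≠ 0 := L_ne_zero (by omega)
  rw [lnomD, lnomD, show 2 * m + 2 - (m + 1) = m + 1 by omega, show 2 * m + 2 - m = m + 2 by omega,
    LFactD_succ (m + 1), LFactD_succ m, show 2 * (m + 1 + 1) = 2 * m + 4 by ring,
    show 2 * (m + 1) = 2 * m + 2 by ring, hsplit]
  field_simp
  rw [hdouble]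
  ring

/-- for n ≥ 3, the Lucas–Coxeter–Catalan analogue of D_n,
Cat D_{n} = ({3n-2}/{n}) {2(n-1):2 choose n-1:2}, lies in ℕ[s,t]. -/
theorem coxeterCatalan_D (n : ℕ) (hn : 3 ≤ n) :
    ∃ p : P2, Nonneg p ∧
      L (3*n-2) / L n * lnomD 2 (2*(n-1)) (n-1) = φ p := by
  obtain ⟨m, rfl⟩ : ∃ m, n = m + 2 := ⟨n - 2, by omega⟩
  have hmem : L (3 * (m + 2) - 2) / L (m + 2) * lnomD 2 (2 * (m + 2 - 1)) (m + 2 - 1) ∈ nonnegK := by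
    rw [show 3 * (m + 2) - 2 = 3 * m + 4 by omega, show m + 2 - 1 = m + 1 by omega,
      show 2 * (m + 1) = 2 * m + 2 by ring, L_div_mul_lnomD_two]
    have hL := L_mem_nonnegK
    have ht := pt_mem_nonnegK
    exact add_mem
      (mul_mem (mul_mem (hL _) (add_mem (hL _) (mul_mem ht (hL _))))
        (lnomD_mem_nonnegK two_ne_zero (by omega)))
      (mul_mem (mul_mem ht (hL _)) (lnomD_mem_nonnegK two_ne_zero (by omega)))
  obtain ⟨p, hp, hφ⟩ := hmem
  exact ⟨p, hp, hφ.symm⟩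
end
end

section
/- For every integer n ≥ 1, the Lucas–Coxeter–Catalan analogue for the Coxeter group B_n satisfies the identity Π_{i=1}^{n} {2n+2i}/{2i} = {2n:2 choose n:2}_L, and in particular it is a polynomial in s and t all of whose coefficients are nonnegative integers. -/
open MvPolynomial Finset

noncomputable section

-- ===== auxiliary development =====

lemma nn_zero : Nonneg 0 := fun m => by simp [Nonneg]

lemma nn_one : Nonneg 1 := fun m => by
  classical
  rw [MvPolynomial.coeff_one]
  split <;> norm_num

lemma nn_add {p q : P2} (hp : Nonneg p) (hq : Nonneg q) : Nonneg (p + q) := fun m => by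
  rw [MvPolynomial.coeff_add]; exact add_nonneg (hp m) (hq m)

lemma nn_mul {p q : P2} (hp : Nonneg p) (hq : Nonneg q) : Nonneg (p * q) := fun m => by
  classical
  rw [MvPolynomial.coeff_mul]
  exact Finset.sum_nonneg fun x _ => mul_nonneg (hp _) (hq _)

lemma nn_X (i : Fin 2) : Nonneg (X i) := fun m => by
  classical
  rw [MvPolynomial.coeff_X']
  split <;> norm_num

lemma nn_lucas (n : ℕ) : Nonneg (lucas n) := by
  induction n using Nat.twoStepInduction with
  | zero => exact nn_zero
  | one => exact nn_one
  | more n ih1 ih2 =>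
    show Nonneg (ps * lucas (n+1) + pt * lucas n)
    exact nn_add (nn_mul (nn_X 0) ih2) (nn_mul (nn_X 1) ih1)

/-- The addition identity {a+b+1} = {a+1}{b+1} + t {a}{b}. -/
lemma lucas_addIdent (a b : ℕ) :
    lucas (a + b + 1) = lucas (a+1) * lucas (b+1) + pt * lucas a * lucas b := by
  induction a using Nat.twoStepInduction with
  | zero => simp [lucas]
  | one =>
    rw [show 1+b+1 = b+2 from by omega, show (1:ℕ)+1 = 2 from rfl]
    show ps * lucas (b+1) + pt * lucas b
      = (ps * lucas 1 + pt * lucas 0) * lucas (b+1) + pt * lucas 1 * lucas b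
    simp [lucas]
  | more a ih1 ih2 =>
    have e1 : a + 2 + b + 1 = (a + b + 1) + 2 := by omega
    rw [e1, show lucas ((a+b+1)+2) = ps * lucas ((a+b+1)+1) + pt * lucas (a+b+1) from rfl,
      show (a+b+1)+1 = (a+1)+b+1 from by omega, ih2, ih1,
      show lucas (a+2+1) = ps * lucas (a+2) + pt * lucas (a+1) from rfl,
      show lucas (a+1+1) = ps * lucas (a+1) + pt * lucas a from rfl]
    ring

/-- Polynomial 2-divisible Lucasnomial, by a Pascal-like recursion. -/
def lb : ℕ → ℕ → P2
  | _, 0 => 1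
  | 0, _+1 => 0
  | n+1, k+1 =>
    if n = k then 1
    else lucas (2*(k+1)+1) * lb n (k+1) + pt * lucas (2*(n-k)-1) * lb n k

lemma nn_lb (n k : ℕ) : Nonneg (lb n k) := by
  induction n generalizing k with
  | zero =>
    cases k with
    | zero => exact nn_one
    | succ k => exact nn_zero
  | succ n ih =>
    cases k with
    | zero => exact nn_one
    | succ k =>
      show Nonneg (if n = k then 1
        else lucas (2*(k+1)+1) * lb n (k+1) + pt * lucas (2*(n-k)-1) * lb n k)
      split
      · exact nn_one
      · exact nn_add (nn_mul (nn_lucas _) (ih _))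
          (nn_mul (nn_mul (nn_X 1) (nn_lucas _)) (ih _))

lemma lucasFactD_succ (n : ℕ) : lucasFactD 2 (n+1) = lucasFactD 2 n * lucas (2*(n+1)) := by
  simp [lucasFactD, Finset.prod_range_succ]

/-- Key factorization: {n:2}! = lb n k * {k:2}! * {n-k:2}! for k ≤ n. -/
lemma key (n : ℕ) : ∀ k, k ≤ n →
    lucasFactD 2 n = lb n k * (lucasFactD 2 k * lucasFactD 2 (n - k)) := by
  induction n with
  | zero =>
    intro k hk
    interval_cases k
    simp [lb, lucasFactD]
  | succ n ih =>
    intro k hk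
    cases k with
    | zero => simp [lb, lucasFactD]
    | succ k =>
      by_cases hnk : n = k
      · subst hnk
        show lucasFactD 2 (n+1) = (if n = n then 1 else _) * _
        simp [lucasFactD]
      · have hk' : k + 1 ≤ n := by omega
        obtain ⟨m, hm⟩ : ∃ m, n = k + 1 + m := ⟨n - (k+1), by omega⟩
        subst hm
        have H1 := ih (k+1) (by omega)
        have H2 := ih k (by omega)
        rw [show k + 1 + m - (k + 1) = m from by omega] at H1
        rw [show k + 1 + m - k = m + 1 from by omega] at H2
        have hlb : lb (k+1+m+1) (k+1)
            = lucas (2*(k+1)+1) * lb (k+1+m) (k+1)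
              + pt * lucas (2*((k+1+m)-k)-1) * lb (k+1+m) k := by
          show (if k+1+m = k then 1 else _) = _
          rw [if_neg (by omega)]
        rw [show 2*((k+1+m)-k)-1 = 2*m+1 from by omega] at hlb
        have hL : lucas (2*(k+1+m+1))
            = lucas (2*k+2+1) * lucas (2*m+1+1) + pt * lucas (2*k+2) * lucas (2*m+1) := by
          rw [show 2*(k+1+m+1) = (2*k+2) + (2*m+1) + 1 from by omega]
          exact lucas_addIdent (2*k+2) (2*m+1)
        rw [show k+1+m+1-(k+1) = m+1 from by omega,
          lucasFactD_succ (k+1+m), hlb, hL, lucasFactD_succ m, lucasFactD_succ k,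
          show 2*(k+1)+1 = 2*k+2+1 from by ring, show 2*(k+1) = 2*k+2 from by ring,
          show 2*(m+1) = 2*m+1+1 from by ring]
        rw [lucasFactD_succ k, show 2*(k+1) = 2*k+2 from by ring] at H1
        rw [lucasFactD_succ m, show 2*(m+1) = 2*m+1+1 from by ring] at H2
        linear_combination (lucas (2*k+2+1) * lucas (2*m+1+1)) * H1
          + (pt * lucas (2*k+2) * lucas (2*m+1)) * H2

/-- evaluation s := 1, t := 0 -/
def ev : P2 →+* ℤ := MvPolynomial.eval (fun i => if i = 0 then 1 else 0)

lemma ev_lucas (n : ℕ) : ev (lucas (n+1)) = 1 := by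
  induction n using Nat.twoStepInduction with
  | zero => simp [lucas, ev]
  | one =>
    show ev (ps * lucas 1 + pt * lucas 0) = 1
    simp [lucas, ev, ps, pt]
  | more n ih1 ih2 =>
    show ev (ps * lucas (n+1+1) + pt * lucas (n+1)) = 1
    rw [map_add, map_mul, map_mul, ih2, ih1]
    simp [ev, ps, pt]

lemma lucas_ne_zero (n : ℕ) (h : 1 ≤ n) : lucas n ≠ 0 := by
  obtain ⟨m, rfl⟩ : ∃ m, n = m + 1 := ⟨n - 1, by omega⟩
  intro hc
  have := ev_lucas m
  rw [hc] at this
  simp at this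

lemma lucasFactD_ne_zero (n : ℕ) : lucasFactD 2 n ≠ 0 := by
  rw [lucasFactD]
  exact Finset.prod_ne_zero_iff.2 fun i _ => lucas_ne_zero _ (by omega)

lemma phi_inj : Function.Injective φ := IsFractionRing.injective P2 K

lemma phi_ne_zero {p : P2} (h : p ≠ 0) : φ p ≠ 0 := by
  simpa using (map_ne_zero_iff φ phi_inj).2 h

lemma prod_Icc_one {M : Type*} [CommMonoid M] (f : ℕ → M) (n : ℕ) :
    ∏ i ∈ Finset.Icc 1 n, f i = ∏ i ∈ Finset.range n, f (i+1) := by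
  rw [← Finset.Ico_add_one_right_eq_Icc, Finset.prod_Ico_eq_prod_range]
  exact Finset.prod_congr (by simp) fun i _ => by rw [add_comm]

/-- for n ≥ 1, Cat B_{n} = Π_{i=1}^{n} {2n+2i}/{2i} = {2n:2 choose n:2},
and this lies in ℕ[s,t]. -/
theorem coxeterCatalan_B (n : ℕ) (hn : 1 ≤ n) :
    (∏ i ∈ Finset.Icc 1 n, L (2*n+2*i) / L (2*i)) = lnomD 2 (2*n) n ∧
    ∃ p : P2, Nonneg p ∧ lnomD 2 (2*n) n = φ p := by
  classical
  have hsplit : lucasFactD 2 (2*n)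
      = lucasFactD 2 n * ∏ i ∈ Finset.Icc 1 n, lucas (2*n + 2*i) := by
    have h0 : lucasFactD 2 (2*n) = ∏ i ∈ Finset.range (n+n), lucas (2*(i+1)) := by
      rw [lucasFactD]
      apply Finset.prod_congr (by congr 1; omega) fun i _ => rfl
    rw [h0, Finset.prod_range_add, lucasFactD]
    congr 1
    rw [prod_Icc_one]
    exact Finset.prod_congr rfl fun i _ => by congr 1; omega
  have hFn : φ (lucasFactD 2 n) ≠ 0 := phi_ne_zero (lucasFactD_ne_zero n)
  have hkey := key (2*n) n (by omega)
  rw [show 2*n - n = n from by omega] at hkey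
  have hlnom : lnomD 2 (2*n) n = φ (lb (2*n) n) := by
    rw [lnomD, LFactD, LFactD, LFactD, show 2*n - n = n from by omega, hkey,
      map_mul, map_mul]
    field_simp
  constructor
  · rw [Finset.prod_div_distrib, hlnom]
    have h1 : ∏ i ∈ Finset.Icc 1 n, L (2*n+2*i)
        = φ (∏ i ∈ Finset.Icc 1 n, lucas (2*n + 2*i)) := by
      rw [map_prod]; rfl
    have h2 : ∏ i ∈ Finset.Icc 1 n, L (2*i) = φ (lucasFactD 2 n) := by
      rw [lucasFactD, prod_Icc_one (fun i => L (2*i)), map_prod]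
      rfl
    rw [h1, h2]
    have hp : lucasFactD 2 n * (∏ i ∈ Finset.Icc 1 n, lucas (2*n+2*i))
        = lucasFactD 2 n * (lb (2*n) n * lucasFactD 2 n) := by
      linear_combination hkey - hsplit
    have hp' := mul_left_cancel₀ (lucasFactD_ne_zero n) hp
    rw [hp', map_mul, mul_div_cancel_right₀ _ hFn]
  · exact ⟨lb (2*n) n, nn_lb _ _, hlnom⟩
end
end
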